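/- Let X be a projective scheme of dimension d over a field, A a divisor on X, and T a coherent sheaf on X supported in dimension ≤ d−1. If h⁰(X, f_*O_Y ⊗ O_X(mA)) ≥ C′·m^d + o(m^d) and h⁰(X, T ⊗ O_X(mA)) = O(m^{d−1}), where 0 → O_X(−n)^r → f_*O_Y → T → 0 is exact, then h⁰(X, O_X(−n) ⊗ O_X(mA)) ≥ (C′/r)·m^d + o(m^d), and hence h⁰(X, O_X(mA)) ≥ (C′/r)·m^d + o(m^d); in particular A is big. -/
import Mathlib


open Filter Asymptotics

/-- The asymptotic counting argument in the proof of Lemma 3.2(3).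
`X` is a projective scheme of dimension `d` with a divisor `A`; `F m = h⁰(X, f_*O_Y ⊗ O(mA))`,
`G m = h⁰(X, T ⊗ O(mA))` where `T` is supported in dimension `≤ d - 1`, and
`H m = h⁰(X, O_X(-n) ⊗ O(mA))`, `h0A m = h⁰(X, O(mA))`.  From the exact sequence
`0 → O_X(-n)^r → f_*O_Y → T → 0` one gets `F ≤ r·H + G`, and twisting down gives
`H ≤ h0A`.  If `F m ≥ C'·m^d + o(m^d)` and `G = O(m^(d-1))`, then
`H m ≥ (C'/r)·m^d + o(m^d)`, hence `h0A m ≥ (C'/r)·m^d + o(m^d)`; in particular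
(for `C' > 0`) `A` is big. -/
theorem stmt_8 (d r : ℕ) (hr : 0 < r) (hd : 0 < d) (C' : ℝ)
    (F G H h0A : ℕ → ℝ)
    (hnonneg : ∀ m, 0 ≤ H m)
    (hexact : ∀ m, F m ≤ (r : ℝ) * H m + G m)
    (htwist : ∀ m, H m ≤ h0A m)
    (hF : ∃ g : ℕ → ℝ, (g =o[atTop] fun m : ℕ => (m : ℝ) ^ d) ∧
      ∀ m, F m ≥ C' * (m : ℝ) ^ d + g m)
    (hG : G =O[atTop] fun m : ℕ => (m : ℝ) ^ (d - 1)) :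
    (∃ g₁ : ℕ → ℝ, (g₁ =o[atTop] fun m : ℕ => (m : ℝ) ^ d) ∧
      ∀ m, H m ≥ (C' / (r : ℝ)) * (m : ℝ) ^ d + g₁ m) ∧
    (∃ g₂ : ℕ → ℝ, (g₂ =o[atTop] fun m : ℕ => (m : ℝ) ^ d) ∧
      ∀ m, h0A m ≥ (C' / (r : ℝ)) * (m : ℝ) ^ d + g₂ m) ∧
    (0 < C' → ∃ C : ℝ, 0 < C ∧ ∀ᶠ m : ℕ in atTop, C * (m : ℝ) ^ d ≤ h0A m) := by
  obtain ⟨g, hg, hFg⟩ := hF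
  have hrR : (0:ℝ) < r := by exact_mod_cast hr
  -- m^(d-1) is o(m^d)
  have hpow : (fun m : ℕ => (m : ℝ) ^ (d - 1)) =o[atTop] fun m : ℕ => (m : ℝ) ^ d := by
    have h1 : (fun x : ℝ => x ^ (d - 1)) =o[atTop] fun x : ℝ => x ^ d :=
      isLittleO_pow_pow_atTop_of_lt (Nat.sub_lt hd one_pos)
    exact h1.comp_tendsto tendsto_natCast_atTop_atTop
  have hGo : G =o[atTop] fun m : ℕ => (m : ℝ) ^ d := hG.trans_isLittleO hpow
  set g₁ : ℕ → ℝ := fun m => (g m - G m) / r with hg₁def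
  have hg₁o : g₁ =o[atTop] fun m : ℕ => (m : ℝ) ^ d := by
    have : (fun m => g m - G m) =o[atTop] fun m : ℕ => (m : ℝ) ^ d := hg.sub hGo
    have h2 := this.const_mul_left ((r:ℝ)⁻¹)
    simpa [hg₁def, div_eq_mul_inv, mul_comm] using h2
  have hH : ∀ m, H m ≥ (C' / (r : ℝ)) * (m : ℝ) ^ d + g₁ m := by
    intro m
    have h1 : C' * (m : ℝ) ^ d + g m ≤ (r : ℝ) * H m + G m :=
      le_trans (hFg m) (hexact m)
    have h2 : (C' * (m : ℝ) ^ d + g m - G m) / r ≤ H m := by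
      rw [div_le_iff₀ hrR]
      linarith
    calc (C' / (r : ℝ)) * (m : ℝ) ^ d + g₁ m
        = (C' * (m : ℝ) ^ d + g m - G m) / r := by rw [hg₁def]; ring
      _ ≤ H m := h2
  refine ⟨⟨g₁, hg₁o, hH⟩, ⟨g₁, hg₁o, fun m => le_trans (hH m) (htwist m)⟩, ?_⟩
  intro hC'
  refine ⟨C' / (2 * r), by positivity, ?_⟩
  have hev := (hg₁o.def (by positivity : (0:ℝ) < C' / (2 * r))).filter_mono le_rfl
  filter_upwards [hev] with m hm
  have hpd : (0:ℝ) ≤ (m:ℝ)^d := by positivity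
  have : -(C' / (2*r)) * (m:ℝ)^d ≤ g₁ m := by
    have := neg_abs_le (g₁ m)
    have h2 : |g₁ m| ≤ C' / (2*r) * (m:ℝ)^d := by
      simpa [abs_of_nonneg hpd] using hm
    nlinarith [abs_nonneg (g₁ m)]
  have h3 := le_trans (hH m) (htwist m)
  have : (C' / (r:ℝ)) * (m:ℝ)^d - (C' / (2*r)) * (m:ℝ)^d ≤ h0A m := by linarith
  have heq : (C' / (r:ℝ)) * (m:ℝ)^d - (C' / (2*r)) * (m:ℝ)^d = C' / (2*r) * (m:ℝ)^d := by
    field_simp; ring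
  linarith [heq ▸ this]
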